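/- Let p, q ∈ ℂ^{n+1} be nonzero with 0 < d(p,q) < π/2 and let z ∈ ℂ^{n+1} be nonzero. Then: (a) if inf_{t ∈ ℝ} d(z, γ_t(p,q)) < π/4, then z·ᾱ ≠ 0 and z·β̄ ≠ 0; (b) μ_{p,q}(γ_t(p,q)) = 0 for every t ∈ ℝ; (c) if z·ᾱ ≠ 0 and z·β̄ ≠ 0, then inf_{t ∈ ℝ} d(z, γ_t(p,q)) < π/2 and μ_{p,q}(z) ≥ log(sec(inf_{t ∈ ℝ} d(z, γ_t(p,q)))). -/

import Mathlib

noncomputable section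

/-- Hermitian product `w·z̄ = Σᵢ wⁱ·conj(zⁱ)` on `ℂ^m`. -/
def herm {m : ℕ} (w z : EuclideanSpace ℂ (Fin m)) : ℂ :=
  ∑ i, w i * (starRingEnd ℂ) (z i)

/-- Fubini–Study distance between (the projective classes of) `p` and `q`. -/
def fsDist {m : ℕ} (p q : EuclideanSpace ℂ (Fin m)) : ℝ :=
  Real.arccos (‖herm p q‖ / (‖p‖ * ‖q‖))

/-- Initial velocity `γ₀'(p,q)` of the geodesic from `[p]` to `[q]`. -/
def gammaDir {m : ℕ} (p q : EuclideanSpace ℂ (Fin m)) : EuclideanSpace ℂ (Fin m) :=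
  (Real.cot (fsDist p q) : ℂ) • (((‖p‖ : ℂ) / herm q p) • q - (‖p‖ : ℂ)⁻¹ • p)

/-- The geodesic `γ_t(p,q) = cos t·(p/|p|) + sin t·γ₀'(p,q)`. -/
def geo {m : ℕ} (t : ℝ) (p q : EuclideanSpace ℂ (Fin m)) : EuclideanSpace ℂ (Fin m) :=
  (Real.cos t : ℂ) • ((‖p‖ : ℂ)⁻¹ • p) + (Real.sin t : ℂ) • gammaDir p q

/-- The velocity `γ_t'(p,q) = −sin t·(p/|p|) + cos t·γ₀'(p,q)`. -/
def geoVel {m : ℕ} (t : ℝ) (p q : EuclideanSpace ℂ (Fin m)) : EuclideanSpace ℂ (Fin m) :=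
  (-(Real.sin t) : ℂ) • ((‖p‖ : ℂ)⁻¹ • p) + (Real.cos t : ℂ) • gammaDir p q

/-- `α = (p/|p| + i·γ₀'(p,q))/√2`. -/
def alphaV {m : ℕ} (p q : EuclideanSpace ℂ (Fin m)) : EuclideanSpace ℂ (Fin m) :=
  ((Real.sqrt 2 : ℂ))⁻¹ • ((‖p‖ : ℂ)⁻¹ • p + Complex.I • gammaDir p q)

/-- `β = (p/|p| − i·γ₀'(p,q))/√2`. -/
def betaV {m : ℕ} (p q : EuclideanSpace ℂ (Fin m)) : EuclideanSpace ℂ (Fin m) :=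
  ((Real.sqrt 2 : ℂ))⁻¹ • ((‖p‖ : ℂ)⁻¹ • p - Complex.I • gammaDir p q)

/-- `μ_{p,q}(z) = −(1/2)·log(2·|z·ᾱ|·|z·β̄|/|z|²)`. -/
def muW {m : ℕ} (p q z : EuclideanSpace ℂ (Fin m)) : ℝ :=
  -(1 / 2 : ℝ) * Real.log (2 * ‖herm z (alphaV p q)‖ *
    ‖herm z (betaV p q)‖ / ‖z‖ ^ 2)

/-!
Put `u = p/|p|` and `v = γ₀'(p,q)`. For `0 < d(p,q) < π/2` the pair `(u, v)` is orthonormal, so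
`γ_t = cos t·u + sin t·v` is a unit great circle and `α, β` is an orthonormal basis of the complex
span of `u, v`. With `a = z·ᾱ` and `b = z·β̄` one has `√2·(z·γ̄_t) = e^{it}·a + e^{-it}·b`, whose
modulus is at most `|a| + |b|`, with equality when the arguments of the two terms are aligned; hence
`inf_t d(z, γ_t) = arccos ((|a| + |b|)/(√2·|z|))`. Bessel's inequality `|a|² + |b|² ≤ |z|²`
gives (a) and keeps the argument of `arccos` in `[0, 1]`, and AM–GM `4|a||b| ≤ (|a| + |b|)²`
gives (c). Part (b) is the computation `|γ_t·ᾱ| = |γ_t·β̄| = 1/√2`.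
-/

open Complex
open scoped InnerProductSpace ComplexConjugate

lemma herm_eq_inner {m : ℕ} (w z : EuclideanSpace ℂ (Fin m)) : herm w z = ⟪z, w⟫_ℂ := by
  simp [herm, PiLp.inner_apply]

lemma norm_exp_mul_I_mul_add_le (A B : ℂ) (t : ℝ) :
    ‖exp (t * I) * A + exp (-t * I) * B‖ ≤ ‖A‖ + ‖B‖ :=
  calc _ ≤ ‖exp (t * I) * A‖ + ‖exp ((-t : ℝ) * I) * B‖ := by
        rw [ofReal_neg]; exact norm_add_le _ _
    _ = ‖A‖ + ‖B‖ := by simp only [norm_mul, norm_exp_ofReal_mul_I, one_mul]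

lemma exp_mul_I_mul_eq_norm_mul_exp (A : ℂ) (t : ℝ) :
    exp (t * I) * A = ‖A‖ * exp ((t + A.arg : ℝ) * I) := by
  conv_lhs => rw [← norm_mul_exp_arg_mul_I A]
  rw [mul_left_comm, ← Complex.exp_add]
  push_cast
  ring_nf

lemma exists_norm_exp_mul_I_mul_add_eq (A B : ℂ) :
    ∃ t : ℝ, ‖exp (t * I) * A + exp (-t * I) * B‖ = ‖A‖ + ‖B‖ := by
  refine ⟨(B.arg - A.arg) / 2, ?_⟩
  -- at this `t` both summands have argument `(arg A + arg B) / 2`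
  rw [← ofReal_neg, exp_mul_I_mul_eq_norm_mul_exp, exp_mul_I_mul_eq_norm_mul_exp,
    show (B.arg - A.arg) / 2 + A.arg = (A.arg + B.arg) / 2 by ring,
    show -((B.arg - A.arg) / 2) + B.arg = (A.arg + B.arg) / 2 by ring, ← add_mul, norm_mul,
    norm_exp_ofReal_mul_I, mul_one, ← ofReal_add, norm_real, Real.norm_of_nonneg (by positivity)]

lemma iInf_arccos_eq_of_isGreatest {ι : Type*} {g : ι → ℝ} {a : ℝ}
    (h : IsGreatest (Set.range g) a) : ⨅ i, Real.arccos (g i) = Real.arccos a := by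
  have := Real.antitone_arccos.map_isGreatest h
  rw [← Set.range_comp] at this
  exact this.csInf_eq

lemma pi_div_four_le_arccos_div {x y : ℝ} (hxy : x ≤ y) (hy : 0 ≤ y) :
    Real.pi / 4 ≤ Real.arccos (x / (√2 * y)) := by
  have hx : x / (√2 * y) ≤ √2 / 2 := by
    refine div_le_of_le_mul₀ (by positivity) (by positivity) ?_
    rw [div_mul_eq_mul_div, ← mul_assoc, Real.mul_self_sqrt zero_le_two]
    linarith
  calc Real.pi / 4 = Real.arccos (√2 / 2) := by
        rw [← Real.cos_pi_div_four, Real.arccos_cos (by positivity) (by linarith [Real.pi_pos])]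
    _ ≤ _ := Real.antitone_arccos hx

lemma add_div_sqrt_two_mul_le_one {a b r : ℝ} (h : a ^ 2 + b ^ 2 ≤ r ^ 2) (hr : 0 ≤ r) :
    (a + b) / (√2 * r) ≤ 1 := by
  refine div_le_one_of_le₀ (le_of_sq_le_sq ?_ (by positivity)) (by positivity)
  rw [mul_pow, Real.sq_sqrt zero_le_two]
  nlinarith [sq_nonneg (a - b)]

lemma log_inv_add_div_le_neg_half_log_mul {a b r : ℝ} (ha : 0 < a) (hb : 0 < b) (hr : 0 < r) :
    Real.log (((a + b) / (√2 * r))⁻¹) ≤ -(1 / 2) * Real.log (2 * a * b / r ^ 2) := by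
  have amgm : 2 * a * b / r ^ 2 ≤ ((a + b) / (√2 * r)) ^ 2 := by
    rw [div_pow, mul_pow, Real.sq_sqrt zero_le_two, div_le_div_iff₀ (by positivity) (by positivity)]
    nlinarith [sq_nonneg (a - b), sq_nonneg r]
  have := Real.log_le_log (by positivity) amgm
  rw [Real.log_pow, Real.log_inv] at *
  push_cast at this
  linarith

section OrthonormalPair

variable {E : Type*} [NormedAddCommGroup E] [InnerProductSpace ℂ E]

lemma orthonormal_pair_iff {x y : E} :
    Orthonormal ℂ ![x, y] ↔ ⟪x, x⟫_ℂ = 1 ∧ ⟪y, y⟫_ℂ = 1 ∧ ⟪x, y⟫_ℂ = 0 := by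
  simp only [orthonormal_iff_ite, Fin.forall_fin_two, Matrix.cons_val_zero, Matrix.cons_val_one,
    Matrix.cons_val_fin_one]
  simp only [Fin.isValue, ↓reduceIte, Fin.zero_eq_one_iff, OfNat.ofNat_ne_one, Fin.one_eq_zero_iff]
  constructor
  · rintro ⟨⟨hxx, hxy⟩, -, hyy⟩
    exact ⟨hxx, hyy, hxy⟩
  · rintro ⟨hxx, hyy, hxy⟩
    exact ⟨⟨hxx, hxy⟩, inner_eq_zero_symm.1 hxy, hyy⟩

lemma norm_eq_one_of_inner_self_eq_one {x : E} (h : ⟪x, x⟫_ℂ = 1) : ‖x‖ = 1 := by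
  rw [norm_eq_sqrt_re_inner (𝕜 := ℂ), h]
  simp

variable {u v : E}

lemma norm_cos_smul_add_sin_smul (h : Orthonormal ℂ ![u, v]) (t : ℝ) :
    ‖(Real.cos t : ℂ) • u + (Real.sin t : ℂ) • v‖ = 1 := by
  obtain ⟨huu, hvv, huv⟩ := orthonormal_pair_iff.1 h
  have hvu : ⟪v, u⟫_ℂ = 0 := inner_eq_zero_symm.1 huv
  refine norm_eq_one_of_inner_self_eq_one ?_
  simp only [inner_add_left, inner_add_right, inner_smul_left, inner_smul_right, huu, hvv, huv,
    hvu, conj_ofReal]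
  norm_cast
  linear_combination Real.cos_sq_add_sin_sq t

lemma orthonormal_add_I_smul_sub_I_smul (h : Orthonormal ℂ ![u, v]) :
    Orthonormal ℂ ![(√2 : ℂ)⁻¹ • (u + I • v), (√2 : ℂ)⁻¹ • (u - I • v)] := by
  obtain ⟨huu, hvv, huv⟩ := orthonormal_pair_iff.1 h
  have hvu : ⟪v, u⟫_ℂ = 0 := inner_eq_zero_symm.1 huv
  have hs : (√2 : ℂ) ≠ 0 := by exact_mod_cast (Real.sqrt_pos.2 two_pos).ne'
  have hs2 : (√2 : ℂ) ^ 2 = 2 := by exact_mod_cast Real.sq_sqrt zero_le_two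
  refine orthonormal_pair_iff.2 ⟨?_, ?_, ?_⟩ <;>
    simp only [inner_add_left, inner_add_right, inner_sub_left, inner_sub_right, inner_smul_left,
      inner_smul_right, huu, hvv, huv, hvu, map_inv₀, conj_ofReal, conj_I] <;>
    field_simp
  · linear_combination -hs2 - I_sq
  · linear_combination -hs2 - I_sq
  · linear_combination I_sq

lemma exp_mul_inner_add_exp_mul_inner_eq_sqrt_two_mul_inner (u v z : E) (t : ℝ) :
    exp (t * I) * ⟪(√2 : ℂ)⁻¹ • (u + I • v), z⟫_ℂ
      + exp (-t * I) * ⟪(√2 : ℂ)⁻¹ • (u - I • v), z⟫_ℂ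
      = √2 * ⟪(Real.cos t : ℂ) • u + (Real.sin t : ℂ) • v, z⟫_ℂ := by
  have hs : (√2 : ℂ) ≠ 0 := by exact_mod_cast (Real.sqrt_pos.2 two_pos).ne'
  have hs2 : (√2 : ℂ) ^ 2 = 2 := by exact_mod_cast Real.sq_sqrt zero_le_two
  simp only [inner_add_left, inner_sub_left, inner_smul_left, map_inv₀, conj_ofReal, conj_I]
  rw [exp_mul_I, exp_mul_I, cos_neg, sin_neg, ← ofReal_cos, ← ofReal_sin]
  field_simp
  linear_combination (-2 * Real.sin t * ⟪v, z⟫_ℂ) * I_sq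
    - (Real.cos t * ⟪u, z⟫_ℂ + Real.sin t * ⟪v, z⟫_ℂ) * hs2

lemma inner_add_I_smul_cos_smul_add_sin_smul (h : Orthonormal ℂ ![u, v]) (t : ℝ) :
    ⟪(√2 : ℂ)⁻¹ • (u + I • v), (Real.cos t : ℂ) • u + (Real.sin t : ℂ) • v⟫_ℂ
      = (√2 : ℂ)⁻¹ * exp (-t * I) := by
  obtain ⟨huu, hvv, huv⟩ := orthonormal_pair_iff.1 h
  have hvu : ⟪v, u⟫_ℂ = 0 := inner_eq_zero_symm.1 huv
  simp only [inner_add_left, inner_add_right, inner_smul_left, inner_smul_right, huu, hvv, huv,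
    hvu, map_inv₀, conj_ofReal, conj_I, exp_mul_I, cos_neg, sin_neg, ofReal_cos, ofReal_sin]
  ring

lemma inner_sub_I_smul_cos_smul_add_sin_smul (h : Orthonormal ℂ ![u, v]) (t : ℝ) :
    ⟪(√2 : ℂ)⁻¹ • (u - I • v), (Real.cos t : ℂ) • u + (Real.sin t : ℂ) • v⟫_ℂ
      = (√2 : ℂ)⁻¹ * exp (t * I) := by
  obtain ⟨huu, hvv, huv⟩ := orthonormal_pair_iff.1 h
  have hvu : ⟪v, u⟫_ℂ = 0 := inner_eq_zero_symm.1 huv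
  simp only [inner_sub_left, inner_add_right, inner_smul_left, inner_smul_right, huu, hvv, huv,
    hvu, map_inv₀, conj_ofReal, conj_I, exp_mul_I, ofReal_cos, ofReal_sin]
  ring

lemma sq_norm_inner_add_I_smul_add_sq_norm_inner_sub_I_smul_le (h : Orthonormal ℂ ![u, v]) (z : E) :
    ‖⟪(√2 : ℂ)⁻¹ • (u + I • v), z⟫_ℂ‖ ^ 2 + ‖⟪(√2 : ℂ)⁻¹ • (u - I • v), z⟫_ℂ‖ ^ 2 ≤ ‖z‖ ^ 2 := by
  simpa only [Fin.sum_univ_two, Matrix.cons_val_zero, Matrix.cons_val_one,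
    Matrix.cons_val_fin_one] using
    (orthonormal_add_I_smul_sub_I_smul h).sum_inner_products_le (s := Finset.univ) z

end OrthonormalPair

section FubiniStudy

variable {m : ℕ} {u v : EuclideanSpace ℂ (Fin m)}

lemma fsDist_cos_smul_add_sin_smul (h : Orthonormal ℂ ![u, v]) (z : EuclideanSpace ℂ (Fin m))
    (t : ℝ) :
    fsDist z ((Real.cos t : ℂ) • u + (Real.sin t : ℂ) • v)
      = Real.arccos (‖exp (t * I) * herm z ((√2 : ℂ)⁻¹ • (u + I • v))
          + exp (-t * I) * herm z ((√2 : ℂ)⁻¹ • (u - I • v))‖ / (√2 * ‖z‖)) := by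
  rw [fsDist, norm_cos_smul_add_sin_smul h, mul_one, herm_eq_inner, herm_eq_inner, herm_eq_inner,
    exp_mul_inner_add_exp_mul_inner_eq_sqrt_two_mul_inner, norm_mul, norm_real,
    Real.norm_of_nonneg (Real.sqrt_nonneg 2), mul_div_mul_left _ _ (Real.sqrt_pos.2 two_pos).ne']

lemma iInf_fsDist_cos_smul_add_sin_smul (h : Orthonormal ℂ ![u, v])
    (z : EuclideanSpace ℂ (Fin m)) :
    ⨅ t : ℝ, fsDist z ((Real.cos t : ℂ) • u + (Real.sin t : ℂ) • v)
      = Real.arccos ((‖herm z ((√2 : ℂ)⁻¹ • (u + I • v))‖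
          + ‖herm z ((√2 : ℂ)⁻¹ • (u - I • v))‖) / (√2 * ‖z‖)) := by
  simp_rw [fsDist_cos_smul_add_sin_smul h z]
  refine iInf_arccos_eq_of_isGreatest ⟨?_, ?_⟩
  · obtain ⟨t, ht⟩ := exists_norm_exp_mul_I_mul_add_eq (herm z ((√2 : ℂ)⁻¹ • (u + I • v)))
      (herm z ((√2 : ℂ)⁻¹ • (u - I • v)))
    exact ⟨t, congrArg (· / (√2 * ‖z‖)) ht⟩
  · rintro _ ⟨t, rfl⟩
    exact div_le_div_of_nonneg_right (norm_exp_mul_I_mul_add_le _ _ t) (by positivity)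

end FubiniStudy

lemma orthonormal_gammaDir {m : ℕ} {p q : EuclideanSpace ℂ (Fin m)} (hd0 : 0 < fsDist p q)
    (hd2 : fsDist p q < Real.pi / 2) :
    Orthonormal ℂ ![(‖p‖ : ℂ)⁻¹ • p, gammaDir p q] := by
  set c := ‖⟪p, q⟫_ℂ‖ / (‖p‖ * ‖q‖) with hc
  have hfs : fsDist p q = Real.arccos c := by
    rw [fsDist, herm_eq_inner, norm_inner_symm]
  rw [hfs] at hd0 hd2
  have hc0 : 0 < c := Real.arccos_lt_pi_div_two.1 hd2
  have hc1 : c < 1 := Real.arccos_pos.1 hd0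
  have hH : ⟪p, q⟫_ℂ ≠ 0 := fun hH => by simp [hc, hH] at hc0
  have hp : (‖p‖ : ℂ) ≠ 0 := fun hp => by simp [hc, ofReal_eq_zero.1 hp] at hc0
  set u := (‖p‖ : ℂ)⁻¹ • p
  set x := ((‖p‖ : ℂ) / ⟪p, q⟫_ℂ) • q
  -- `x` is `q` rescaled so that `⟪u, x⟫ = 1`; then `x - u ⟂ u` and `‖x‖ = 1 / cos d(p, q)`
  have huu : ⟪u, u⟫_ℂ = 1 := by
    rw [inner_smul_left, inner_smul_right, inner_self_eq_norm_sq_to_K]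
    simp only [map_inv₀, conj_ofReal, RCLike.ofReal_eq_complex_ofReal]
    field_simp
  have hux : ⟪u, x⟫_ℂ = 1 := by
    rw [inner_smul_left, inner_smul_right]
    simp only [map_inv₀, conj_ofReal]
    field_simp
  have hx : ‖x‖ = c⁻¹ := by
    rw [norm_smul, norm_div, norm_real, Real.norm_of_nonneg (norm_nonneg p), hc, inv_div]
    ring
  have hperp : ⟪u, x - u⟫_ℂ = 0 := by rw [inner_sub_right, hux, huu, sub_self]
  have hpyth := norm_add_sq_eq_norm_sq_add_norm_sq_of_inner_eq_zero (𝕜 := ℂ) u (x - u) hperp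
  rw [add_sub_cancel, hx, norm_eq_one_of_inner_self_eq_one huu] at hpyth
  have hxu : ‖x - u‖ ^ 2 = c⁻¹ ^ 2 - 1 := by linarith
  have hcot : Real.cot (Real.arccos c) ^ 2 = c ^ 2 / (1 - c ^ 2) := by
    rw [Real.cot_eq_cos_div_sin, Real.cos_arccos (by linarith) hc1.le, Real.sin_arccos, div_pow,
      Real.sq_sqrt (by nlinarith)]
  have hg : gammaDir p q = (Real.cot (Real.arccos c) : ℂ) • (x - u) := by
    rw [gammaDir, herm_eq_inner, hfs]
  refine orthonormal_pair_iff.2 ⟨huu, inner_self_eq_one_of_norm_eq_one ?_, ?_⟩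
  · have hsq : ‖gammaDir p q‖ ^ 2 = 1 := by
      have hs : 1 - c ^ 2 ≠ 0 := by nlinarith
      rw [hg, norm_smul, norm_real, mul_pow, Real.norm_eq_abs, sq_abs, hcot, hxu]
      field_simp
    exact (pow_eq_one_iff_of_nonneg (norm_nonneg _) two_ne_zero).1 hsq
  · rw [hg, inner_smul_right, hperp, mul_zero]

lemma muW_geo {m : ℕ} {p q : EuclideanSpace ℂ (Fin m)}
    (h : Orthonormal ℂ ![(‖p‖ : ℂ)⁻¹ • p, gammaDir p q]) (t : ℝ) : muW p q (geo t p q) = 0 := by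
  have hα : herm (geo t p q) (alphaV p q) = (√2 : ℂ)⁻¹ * exp (-t * I) := by
    rw [herm_eq_inner]
    exact inner_add_I_smul_cos_smul_add_sin_smul h t
  have hβ : herm (geo t p q) (betaV p q) = (√2 : ℂ)⁻¹ * exp (t * I) := by
    rw [herm_eq_inner]
    exact inner_sub_I_smul_cos_smul_add_sin_smul h t
  rw [muW, hα, hβ, geo, norm_cos_smul_add_sin_smul h, ← ofReal_neg]
  simp only [norm_mul, norm_inv, norm_exp_ofReal_mul_I, norm_real,
    Real.norm_of_nonneg (Real.sqrt_nonneg 2)]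
  field_simp
  simp

theorem stmt10_general {n : ℕ} (p q : EuclideanSpace ℂ (Fin (n + 1)))
    (hd0 : 0 < fsDist p q) (hd2 : fsDist p q < Real.pi / 2)
    (z : EuclideanSpace ℂ (Fin (n + 1))) :
    ((⨅ t : ℝ, fsDist z (geo t p q)) < Real.pi / 4 →
      herm z (alphaV p q) ≠ 0 ∧ herm z (betaV p q) ≠ 0) ∧
    (∀ t : ℝ, muW p q (geo t p q) = 0) ∧
    (herm z (alphaV p q) ≠ 0 → herm z (betaV p q) ≠ 0 →
      (⨅ t : ℝ, fsDist z (geo t p q)) < Real.pi / 2 ∧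
      muW p q z ≥ Real.log ((Real.cos (⨅ t : ℝ, fsDist z (geo t p q)))⁻¹)) := by
  have huv := orthonormal_gammaDir hd0 hd2
  have hinf : ⨅ t : ℝ, fsDist z (geo t p q) = Real.arccos
      ((‖herm z (alphaV p q)‖ + ‖herm z (betaV p q)‖) / (√2 * ‖z‖)) :=
    iInf_fsDist_cos_smul_add_sin_smul huv z
  have hbessel : ‖herm z (alphaV p q)‖ ^ 2 + ‖herm z (betaV p q)‖ ^ 2 ≤ ‖z‖ ^ 2 := by
    rw [herm_eq_inner, herm_eq_inner]
    exact sq_norm_inner_add_I_smul_add_sq_norm_inner_sub_I_smul_le huv z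
  rw [hinf]
  refine ⟨fun hlt => ⟨fun hα => ?_, fun hβ => ?_⟩, muW_geo huv, fun hα hβ => ?_⟩
  · rw [hα, norm_zero, zero_add] at hlt
    rw [hα, norm_zero] at hbessel
    exact hlt.not_ge <| pi_div_four_le_arccos_div
      (le_of_sq_le_sq (by linarith) (norm_nonneg z)) (norm_nonneg z)
  · rw [hβ, norm_zero, add_zero] at hlt
    rw [hβ, norm_zero] at hbessel
    exact hlt.not_ge <| pi_div_four_le_arccos_div
      (le_of_sq_le_sq (by linarith) (norm_nonneg z)) (norm_nonneg z)
  · have hA := norm_pos_iff.2 hα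
    have hB := norm_pos_iff.2 hβ
    have hz : 0 < ‖z‖ := by nlinarith [norm_nonneg z]
    have hr : 0 < (‖herm z (alphaV p q)‖ + ‖herm z (betaV p q)‖) / (√2 * ‖z‖) := by positivity
    rw [Real.cos_arccos (by linarith) (add_div_sqrt_two_mul_le_one hbessel hz.le)]
    exact ⟨Real.arccos_lt_pi_div_two.2 hr, log_inv_add_div_le_neg_half_log_mul hA hB hz⟩

theorem stmt10 {n : ℕ} (p q : EuclideanSpace ℂ (Fin (n + 1))) (hp : p ≠ 0) (hq : q ≠ 0)
    (hd0 : 0 < fsDist p q) (hd2 : fsDist p q < Real.pi / 2)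
    (z : EuclideanSpace ℂ (Fin (n + 1))) (hz : z ≠ 0) :
    ((⨅ t : ℝ, fsDist z (geo t p q)) < Real.pi / 4 →
      herm z (alphaV p q) ≠ 0 ∧ herm z (betaV p q) ≠ 0) ∧
    (∀ t : ℝ, muW p q (geo t p q) = 0) ∧
    (herm z (alphaV p q) ≠ 0 → herm z (betaV p q) ≠ 0 →
      (⨅ t : ℝ, fsDist z (geo t p q)) < Real.pi / 2 ∧
      muW p q z ≥ Real.log ((Real.cos (⨅ t : ℝ, fsDist z (geo t p q)))⁻¹)) :=
  stmt10_general p q hd0 hd2 z
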